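/- Let ψ : S¹ → ℝ be C² with finite critical set C'_ψ = {x : ψ'(x) = 0}, let L > 0, a ∈ [0,1), f := Lψ + a (mod 1), and let ε > 0. Then every stationary probability measure μ of the Markov kernel P(x, A) := ν^ε{ω ∈ [−ε,ε] : f(x + ω) ∈ A} is absolutely continuous with respect to Lebesgue measure on S¹. -/

import Mathlib

open MeasureTheory Set Filter Topology

noncomputable section

/-! ## Basic circle setup.
We parametrize `S¹ = ℝ/ℤ` by `[0,1)`.  Functions and subsets of `S¹` are represented by
1-periodic functions/subsets of `ℝ`. -/

/-- The circle distance on `ℝ/ℤ`, computed on representatives. -/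
def dS1 (x y : ℝ) : ℝ := |x - y - (round (x - y) : ℝ)|

/-- Circle distance from a point to a set (a subset of `ℝ`, viewed 1-periodically). -/
def dS1Set (x : ℝ) (A : Set ℝ) : ℝ := sInf (dS1 x '' A)

/-- The critical set `C'_ψ = {ψ' = 0}` as a subset of `ℝ`. -/
def Crit (ψ : ℝ → ℝ) : Set ℝ := {x : ℝ | deriv ψ x = 0}

/-- (H1): the critical set is finite (as a subset of `S¹ ≅ [0,1)`). -/
def H1 (ψ : ℝ → ℝ) : Prop := (Crit ψ ∩ Ico (0:ℝ) 1).Finite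

/-- (H2): no degenerate critical points. -/
def H2 (ψ : ℝ → ℝ) : Prop := ∀ x ∈ Crit ψ, deriv (deriv ψ) x ≠ 0

/-- (H4): `‖ψ'‖_{C⁰} ≤ 1/10` and `‖ψ''‖_{C⁰} ≤ 1/10`. -/
def H4 (ψ : ℝ → ℝ) : Prop :=
  (∀ x : ℝ, |deriv ψ x| ≤ 1 / 10) ∧ ∀ x : ℝ, |deriv (deriv ψ) x| ≤ 1 / 10

/-- Standing assumptions on `ψ`: 1-periodicity, `C²` smoothness, (H1), (H2). -/
def PsiReg (ψ : ℝ → ℝ) : Prop :=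
  Function.Periodic ψ 1 ∧ ContDiff ℝ 2 ψ ∧ H1 ψ ∧ H2 ψ

/-- The constant `K₁ = K₁(ψ)` with `|ψ'(x)| ≥ K₁ d(x, C'_ψ)`. -/
def K1hyp (ψ : ℝ → ℝ) (K₁ : ℝ) : Prop :=
  0 < K₁ ∧ ∀ x : ℝ, K₁ * dS1Set x (Crit ψ) ≤ |deriv ψ x|

/-- `‖ψ''‖_{C⁰}`. -/
def psiC2norm (ψ : ℝ → ℝ) : ℝ := ⨆ x : ℝ, |deriv (deriv ψ) x|

/-- The circle map `f = f_{L,a} = Lψ + a (mod 1)`, on representatives in `[0,1)`. -/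
def cmap (ψ : ℝ → ℝ) (L a x : ℝ) : ℝ := Int.fract (L * ψ x + a)

/-- The random orbit `X_{n+1} = f_{ω_n}(X_n) = f(X_n + ω_n)` on `S¹ ≅ [0,1)`;
`orbitW ψ L a ω x n = fⁿ_ω(x)`. -/
def orbitW (ψ : ℝ → ℝ) (L a : ℝ) (ω : ℕ → ℝ) (x : ℝ) : ℕ → ℝ
  | 0 => x
  | n + 1 => cmap ψ L a (orbitW ψ L a ω x n + ω n)

/-- Deterministic iterates `fⁿ(x)`. -/
def detIter (ψ : ℝ → ℝ) (L a x : ℝ) (n : ℕ) : ℝ := orbitW ψ L a (fun _ => 0) x n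

/-- Condition `(H3)_{c,k}`: `d(fˡ(x̂), C'_ψ) ≥ c` for all `x̂ ∈ C'_ψ` and `1 ≤ l ≤ k`. -/
def H3cond (ψ : ℝ → ℝ) (L a c : ℝ) (k : ℕ) : Prop :=
  ∀ x ∈ Crit ψ, ∀ l : ℕ, 1 ≤ l → l ≤ k → c ≤ dS1Set (detIter ψ L a x l) (Crit ψ)

/-- The lifted random orbit `X̃_{n+1} = f̃(X̃_n + ω_n) = Lψ(X̃_n + ω_n) + a` on `ℝ`;
`liftOrbit ψ L a ω x n = f̃ⁿ_ω(x)`. -/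
def liftOrbit (ψ : ℝ → ℝ) (L a : ℝ) (ω : ℕ → ℝ) (x : ℝ) : ℕ → ℝ
  | 0 => x
  | n + 1 => L * ψ (liftOrbit ψ L a ω x n + ω n) + a

/-- `|(fⁿ_ω)'(x)|`, computed by the chain rule (the mod-1 projection has derivative 1). -/
def derivAbs (ψ : ℝ → ℝ) (L a : ℝ) (ω : ℕ → ℝ) (x : ℝ) (n : ℕ) : ℝ :=
  ∏ i ∈ Finset.range n, |L * deriv ψ (orbitW ψ L a ω x i + ω i)|

/-- `log |(fⁿ_ω)'(x)|`. -/
def logDerivSum (ψ : ℝ → ℝ) (L a : ℝ) (ω : ℕ → ℝ) (x : ℝ) (n : ℕ) : ℝ :=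
  ∑ i ∈ Finset.range n, Real.log |L * deriv ψ (orbitW ψ L a ω x i + ω i)|

/-- `log |(f̃ⁿ_ω)'(x)|` along the lifted orbit. -/
def logDerivSumLift (ψ : ℝ → ℝ) (L a : ℝ) (ω : ℕ → ℝ) (x : ℝ) (n : ℕ) : ℝ :=
  ∑ i ∈ Finset.range n, Real.log |L * deriv ψ (liftOrbit ψ L a ω x i + ω i)|

/-- The (signed) derivative `(f̃ⁿ_ω)'(x)` of the lifted composition. -/
def derivLift (ψ : ℝ → ℝ) (L a : ℝ) (ω : ℕ → ℝ) (x : ℝ) (n : ℕ) : ℝ :=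
  ∏ i ∈ Finset.range n, (L * deriv ψ (liftOrbit ψ L a ω x i + ω i))

/-- The uniform distribution `ν^ε` on `[-ε, ε]`. -/
def unif (ε : ℝ) : Measure ℝ :=
  ENNReal.ofReal (1 / (2 * ε)) • volume.restrict (Icc (-ε) ε)

/-- `P = ν^{⊗ ℕ}`: the coordinates of `ω` are i.i.d. with law `ν` under `P`. -/
def IsProductOf (P : Measure (ℕ → ℝ)) (ν : Measure ℝ) : Prop :=
  IsProbabilityMeasure P ∧
    ∀ (s : Finset ℕ) (A : ℕ → Set ℝ), (∀ i, MeasurableSet (A i)) →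
      P {ω : ℕ → ℝ | ∀ i ∈ s, ω i ∈ A i} = ∏ i ∈ s, ν (A i)

/-- A stationary probability measure for the Markov chain `X_{n+1} = f(X_n + ω_n)` on
`S¹ ≅ [0,1)`. -/
def IsStationaryCirc (ψ : ℝ → ℝ) (L a ε : ℝ) (μ : Measure ℝ) : Prop :=
  IsProbabilityMeasure μ ∧ μ (Ico (0:ℝ) 1) = 1 ∧
    ∀ A : Set ℝ, MeasurableSet A →
      μ A = ∫⁻ x, unif ε {w : ℝ | cmap ψ L a (x + w) ∈ A} ∂μ

/-- `μ` is supported on all of `S¹`. -/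
def FullSupport (μ : Measure ℝ) : Prop :=
  ∀ U : Set ℝ, IsOpen U → (U ∩ Ico (0:ℝ) 1).Nonempty → 0 < μ U

/-- The neighborhood `B(η) = {x : d(x, C'_ψ) ≤ K₁⁻¹ L^η}` of the critical set. -/
def Bset (ψ : ℝ → ℝ) (K₁ L η : ℝ) : Set ℝ := {x : ℝ | dS1Set x (Crit ψ) ≤ K₁⁻¹ * L ^ η}

/-- `G = S¹ ∖ B(-β)`. -/
def Gset (ψ : ℝ → ℝ) (K₁ L β : ℝ) : Set ℝ := (Bset ψ K₁ L (-β))ᶜ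

/-- `B^l` for `0 ≤ l ≤ k` (`B⁰ = I`). -/
def BlSet (ψ : ℝ → ℝ) (K₁ L β : ℝ) (k l : ℕ) : Set ℝ :=
  if l = k then Bset ψ K₁ L (-(k : ℝ) / 2 - β)
  else Bset ψ K₁ L (-(l : ℝ) / 2 - β) \ Bset ψ K₁ L (-((l : ℝ) + 1) / 2 - β)

/-- The shifted set `A_w = A - w`. -/
def shiftSet (A : Set ℝ) (w : ℝ) : Set ℝ := {x : ℝ | x + w ∈ A}
/-! ## The partition `R` into connected components of `G, B⁰, …, B^k`. -/

open scoped Classical in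
/-- The element of `{G, B⁰, …, B^k}` containing `x`. -/
def pieceOf (ψ : ℝ → ℝ) (K₁ L β : ℝ) (k : ℕ) (x : ℝ) : Set ℝ :=
  if x ∈ Gset ψ K₁ L β then Gset ψ K₁ L β
  else if h : ∃ l : ℕ, l ≤ k ∧ x ∈ BlSet ψ K₁ L β k l then BlSet ψ K₁ L β k h.choose
  else ∅

/-- The atom of the partition `R` containing `x`: the connected component of the piece of
`{G, B⁰, …, B^k}` containing `x`. -/
def atomR (ψ : ℝ → ℝ) (K₁ L β : ℝ) (k : ℕ) (x : ℝ) : Set ℝ :=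
  connectedComponentIn (pieceOf ψ K₁ L β k x) x

/-- Length of a subset of `ℝ`. -/
def sLen (S : Set ℝ) : ℝ := (volume S).toReal

/-- The atom of the shifted partition `R_w` containing `z`. -/
def atomRshift (ψ : ℝ → ℝ) (K₁ L β : ℝ) (k : ℕ) (w z : ℝ) : Set ℝ :=
  {t : ℝ | t + w ∈ atomR ψ K₁ L β k (z + w)}

/-- `J` is a longest atom of `R_w` restricted to `Jbar`. -/
def IsLongestAtom (ψ : ℝ → ℝ) (K₁ L β : ℝ) (k : ℕ) (w : ℝ) (Jbar J : Set ℝ) : Prop :=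
  (∃ z ∈ Jbar, J = atomRshift ψ K₁ L β k w z ∩ Jbar) ∧
    ∀ z ∈ Jbar, sLen (atomRshift ψ K₁ L β k w z ∩ Jbar) ≤ sLen J

/-- The random interval process `(J_i, J̄_i)` of Section 3.2:
`J₀ = X₀ + [-ε,ε]`, `J̄₁ = f̃(J₀)`, and for `i ≥ 1`, `J_i` is a longest atom of `R_{ω_i}|_{J̄_i}`
and `J̄_{i+1} = f̃_{ω_i}(J_i)`. -/
def IntervalProc (ψ : ℝ → ℝ) (L a K₁ β ε : ℝ) (k : ℕ) (X₀ : ℝ) (ω : ℕ → ℝ)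
    (J Jbar : ℕ → Set ℝ) : Prop :=
  J 0 = Icc (X₀ - ε) (X₀ + ε) ∧
    Jbar 1 = (fun x : ℝ => L * ψ x + a) '' J 0 ∧
    ∀ i : ℕ, 1 ≤ i →
      IsLongestAtom ψ K₁ L β k (ω i) (Jbar i) (J i) ∧
        Jbar (i + 1) = (fun x : ℝ => L * ψ (x + ω i) + a) '' J i

/-! ## The partition `𝒫` of Section 4.1 and the merged partitions `𝒫_ω(I)`. -/

/-- A partition `𝒫` of `S¹` (regarded 1-periodically on `ℝ`) as in Section 4.1(A):
atoms are intervals subordinate to `{G, B⁰, …, B^k}`; on `G` and `B^k` the atoms are the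
connected components, and each component of `B^l` (`l < k`) is divided into intervals of
length in `[(l+1)⁻² L^{-(l+3)/2-β}, 2(l+1)⁻² L^{-(l+3)/2-β}]`. -/
structure GoodPartition (ψ : ℝ → ℝ) (K₁ L β : ℝ) (k : ℕ) (PP : Set (Set ℝ)) : Prop where
  nonempty : ∀ C ∈ PP, C.Nonempty
  interval : ∀ C ∈ PP, C.OrdConnected
  disj : PP.PairwiseDisjoint id
  cover : ⋃₀ PP = univ
  periodic : ∀ C ∈ PP, (fun x : ℝ => x + 1) '' C ∈ PP
  subordinate : ∀ C ∈ PP, C ⊆ Gset ψ K₁ L β ∨ ∃ l ≤ k, C ⊆ BlSet ψ K₁ L β k l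
  g_atoms : ∀ C ∈ PP, C ⊆ Gset ψ K₁ L β → ∀ x ∈ C,
    C = connectedComponentIn (Gset ψ K₁ L β) x
  bk_atoms : ∀ C ∈ PP, C ⊆ BlSet ψ K₁ L β k k → ∀ x ∈ C,
    C = connectedComponentIn (BlSet ψ K₁ L β k k) x
  bl_len : ∀ C ∈ PP, ∀ l : ℕ, l < k → C ⊆ BlSet ψ K₁ L β k l →
    (((l : ℝ) + 1) ^ 2)⁻¹ * L ^ (-((l : ℝ) + 3) / 2 - β) ≤ sLen C ∧
      sLen C ≤ 2 * (((l : ℝ) + 1) ^ 2)⁻¹ * L ^ (-((l : ℝ) + 3) / 2 - β)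

/-- The non-singleton atoms of the shifted partition `𝒫_w` restricted to `I`. -/
def restAtoms (PP : Set (Set ℝ)) (w : ℝ) (I : Set ℝ) : Set (Set ℝ) :=
  {A : Set ℝ | (∃ C ∈ PP, A = ((fun x : ℝ => x - w) '' C) ∩ I) ∧ A.Nontrivial}

/-- `A` lies (weakly) to the left of `B`. -/
def setBefore (A B : Set ℝ) : Prop := ∀ a ∈ A, ∀ b ∈ B, a ≤ b

/-- `A` is one of the two leftmost members of `𝒜`. -/
def TwoLeft (𝒜 : Set (Set ℝ)) (A : Set ℝ) : Prop :=
  A ∈ 𝒜 ∧ {B ∈ 𝒜 | B ≠ A ∧ setBefore B A}.Subsingleton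

/-- `A` is one of the two rightmost members of `𝒜`. -/
def TwoRight (𝒜 : Set (Set ℝ)) (A : Set ℝ) : Prop :=
  A ∈ 𝒜 ∧ {B ∈ 𝒜 | B ≠ A ∧ setBefore A B}.Subsingleton

/-- `𝒜` has at least four members. -/
def AtLeastFour (𝒜 : Set (Set ℝ)) : Prop :=
  ∃ s : Finset (Set ℝ), ↑s ⊆ 𝒜 ∧ s.card = 4

/-- `S` is an atom of the merged partition `𝒫_w(I)` (whose atoms `𝒜 = restAtoms PP w I`
are merged at the two ends, and which is trivial if `N ≤ 3`). -/
def MergedAtom (𝒜 : Set (Set ℝ)) (I S : Set ℝ) : Prop :=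
  (¬ AtLeastFour 𝒜 ∧ S = I) ∨
    (AtLeastFour 𝒜 ∧
      ((∃ A B : Set ℝ, A ∈ 𝒜 ∧ B ∈ 𝒜 ∧ A ≠ B ∧ TwoLeft 𝒜 A ∧ TwoLeft 𝒜 B ∧ S = A ∪ B) ∨
        (∃ A B : Set ℝ, A ∈ 𝒜 ∧ B ∈ 𝒜 ∧ A ≠ B ∧ TwoRight 𝒜 A ∧ TwoRight 𝒜 B ∧ S = A ∪ B) ∨
        (S ∈ 𝒜 ∧ ¬ TwoLeft 𝒜 S ∧ ¬ TwoRight 𝒜 S)))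

/-! ## Itineraries (Section 4.1(B),(C)). -/

/-- The image `f̃ʲ_ω(A)`. -/
def Fim (ψ : ℝ → ℝ) (L a : ℝ) (ω : ℕ → ℝ) (j : ℕ) (A : Set ℝ) : Set ℝ :=
  (fun x : ℝ => liftOrbit ψ L a ω x j) '' A

/-- `C 0 ⊇ C 1 ⊇ ⋯ ⊇ C n` is a chain of itinerary atoms: `C i ∈ 𝒬_i` for `i ≤ n`. -/
def AtomChain (ψ : ℝ → ℝ) (L a : ℝ) (PP : Set (Set ℝ)) (ω : ℕ → ℝ) (I : Set ℝ)
    (n : ℕ) (C : ℕ → Set ℝ) : Prop :=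
  MergedAtom (restAtoms PP (ω 0) I) I (C 0) ∧
    ∀ i : ℕ, i < n →
      ∃ S : Set ℝ,
        MergedAtom (restAtoms PP (ω (i + 1)) (Fim ψ L a ω (i + 1) (C i)))
            (Fim ψ L a ω (i + 1) (C i)) S ∧
          C (i + 1) = C i ∩ (fun x : ℝ => liftOrbit ψ L a ω x (i + 1)) ⁻¹' S

/-- `τ ≥ n` on the chain `C`: no near-visit to `B^k` before time `n`. -/
def ChainTauGE (ψ : ℝ → ℝ) (K₁ L a β : ℝ) (k : ℕ) (ω : ℕ → ℝ) (C : ℕ → Set ℝ)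
    (n : ℕ) : Prop :=
  ∀ i : ℕ, i < n → Fim ψ L a ω i (C i) ∩ shiftSet (BlSet ψ K₁ L β k k) (ω i) = ∅

/-- The chain `C` is bound at time `t`: `t ∈ [t_j + 1, t_j + p_j]` for some bound period. -/
def ChainBoundAt (ψ : ℝ → ℝ) (K₁ L a β : ℝ) (k : ℕ) (ω : ℕ → ℝ) (C : ℕ → Set ℝ)
    (t : ℕ) : Prop :=
  ∃ s : ℕ, s < t ∧ ∃ l : ℕ, 1 ≤ l ∧ l ≤ k ∧
    (Fim ψ L a ω s (C s) ∩ shiftSet (BlSet ψ K₁ L β k l) (ω s)).Nonempty ∧ t ≤ s + l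

/-! ## The supporting interval process `(I_n)` of Section 5.1. -/

open scoped Classical in
/-- The shift used when mapping `I_n` forward: `0` if `I_n` is a fresh noise interval
(`n = 0` or `n - 1` was a near-visit to `B^k`), and `ω_n` otherwise. -/
def stepShift (ψ : ℝ → ℝ) (K₁ L β : ℝ) (k : ℕ) (ω : ℕ → ℝ) (I : ℕ → Set ℝ) : ℕ → ℝ
  | 0 => 0
  | n + 1 =>
    if (I n ∩ shiftSet (BlSet ψ K₁ L β k k) (ω n)).Nonempty then 0 else ω (n + 1)

/-- The supporting interval process `(I_n)` of Section 5.1: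
`I₀ = X̃₀ + [-ε,ε]`; if `I_n` meets `B^k_{ω_n}` then `I_{n+1} = X̃_{n+1} + [-ε,ε]`, and
otherwise `I_{n+1}` is the atom of `𝒫_{ω_{n+1}}(f̃_{(·)}(I_n))` containing `X̃_{n+1}`. -/
def SuppProc (ψ : ℝ → ℝ) (L a K₁ β ε : ℝ) (k : ℕ) (PP : Set (Set ℝ)) (X₀ : ℝ)
    (ω : ℕ → ℝ) (I : ℕ → Set ℝ) : Prop :=
  I 0 = Icc (X₀ - ε) (X₀ + ε) ∧
    ∀ n : ℕ,
      ((I n ∩ shiftSet (BlSet ψ K₁ L β k k) (ω n)).Nonempty →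
          I (n + 1) =
            Icc (liftOrbit ψ L a ω X₀ (n + 1) - ε) (liftOrbit ψ L a ω X₀ (n + 1) + ε)) ∧
      (¬ (I n ∩ shiftSet (BlSet ψ K₁ L β k k) (ω n)).Nonempty →
          MergedAtom
              (restAtoms PP (ω (n + 1))
                ((fun x : ℝ => L * ψ (x + stepShift ψ K₁ L β k ω I n) + a) '' I n))
              ((fun x : ℝ => L * ψ (x + stepShift ψ K₁ L β k ω I n) + a) '' I n)
              (I (n + 1)) ∧
            liftOrbit ψ L a ω X₀ (n + 1) ∈ I (n + 1))

/-- `τ_j = m` for the supporting interval process: `I_m` meets `B^k_{ω_m}`, `m ≥ 1`, and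
exactly `j - 1` earlier positive times do so. -/
def TauEq (ψ : ℝ → ℝ) (K₁ L β : ℝ) (k : ℕ) (ω : ℕ → ℝ) (I : ℕ → Set ℝ)
    (j m : ℕ) : Prop :=
  0 < m ∧ (I m ∩ shiftSet (BlSet ψ K₁ L β k k) (ω m)).Nonempty ∧
    ∃ s : Finset ℕ,
      (∀ i : ℕ, i ∈ s ↔
        (0 < i ∧ i < m ∧ (I i ∩ shiftSet (BlSet ψ K₁ L β k k) (ω i)).Nonempty)) ∧
      s.card = j - 1

/-! The transition probability `P(x, ·)` is the image of normalised Lebesgue measure on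
`[-ε, ε]` under `g(w) = f(x + w)`. Off the countable set where `ψ'` vanishes, `g' ≠ 0`, so
`g` is locally injective (Rolle), and the change-of-variables inequality `∫_S |g'| ≤ |g(S)|`
shows that `g` pulls Lebesgue-null sets back to null sets. Hence `P(x, A) = 0` for every
null `A`, and stationarity gives `μ(A) = ∫ P(x, A) dμ(x) = 0`. -/

theorem Function.Periodic.deriv {f : ℝ → ℝ} {c : ℝ} (hf : Function.Periodic f c) :
    Function.Periodic (deriv f) c := fun x => by
  rw [← deriv_comp_add_const, show (fun y => f (y + c)) = f from funext hf]

theorem Function.Periodic.countable_preimage {α : Type*} {f : ℝ → α}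
    (hf : Function.Periodic f 1) {t : Set α} (ht : (f ⁻¹' t ∩ Ico 0 1).Countable) :
    (f ⁻¹' t).Countable := by
  have hfract : f ⁻¹' t = Int.fract ⁻¹' (f ⁻¹' t) := by
    ext x
    have h := hf.sub_int_mul_eq (x := x) ⌊x⌋
    rw [mul_one] at h
    rw [mem_preimage, mem_preimage, Int.fract, mem_preimage, h]
  rw [hfract, Int.preimage_fract]
  exact countable_iUnion fun m => ht.preimage (sub_left_injective (b := (m : ℝ)))

theorem volume_preimage_fract_eq_zero {A : Set ℝ} (hA : volume A = 0) :
    volume (Int.fract ⁻¹' A) = 0 := by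
  rw [Int.preimage_fract]
  refine measure_iUnion_null fun m => ?_
  simp only [sub_eq_add_neg, measure_preimage_add_right]
  exact measure_mono_null inter_subset_left hA

theorem Set.OrdConnected.injOn_of_deriv_ne_zero {g : ℝ → ℝ} (hg : Differentiable ℝ g)
    {s : Set ℝ} (hs : s.OrdConnected) (hd : ∀ x ∈ s, deriv g x ≠ 0) : InjOn g s := by
  have ne_of_lt : ∀ y ∈ s, ∀ z ∈ s, y < z → g y ≠ g z := fun y hy z hz hyz hgyz => by
    obtain ⟨c, hc, hc0⟩ := exists_deriv_eq_zero hyz hg.continuous.continuousOn hgyz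
    exact hd c (hs.out hy hz (Ioo_subset_Icc_self hc)) hc0
  intro y hy z hz hgyz
  by_contra hne
  rcases lt_or_gt_of_ne hne with h | h
  · exact ne_of_lt y hy z hz h hgyz
  · exact ne_of_lt z hz y hy h hgyz.symm

theorem Set.OrdConnected.volume_preimage_inter_eq_zero {g : ℝ → ℝ} (hg : Differentiable ℝ g)
    {s : Set ℝ} (hs : s.OrdConnected) (hd : ∀ x ∈ s, deriv g x ≠ 0) {N : Set ℝ}
    (hN : MeasurableSet N) (hN0 : volume N = 0) : volume (g ⁻¹' N ∩ s) = 0 := by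
  have hSm : MeasurableSet (g ⁻¹' N ∩ s) := (hg.continuous.measurable hN).inter hs.measurableSet
  have hint : ∫⁻ x in g ⁻¹' N ∩ s, ENNReal.ofReal |deriv g x| = 0 := by
    refine le_antisymm ?_ zero_le
    calc ∫⁻ x in g ⁻¹' N ∩ s, ENNReal.ofReal |deriv g x|
        ≤ volume (g '' (g ⁻¹' N ∩ s)) := by
          simpa [ContinuousLinearMap.smulRight_one_eq_toSpanSingleton,
            ContinuousLinearMap.det_toSpanSingleton] using
            lintegral_abs_det_fderiv_le_addHaar_image volume hSm
              (fun x _ => (hg x).hasDerivAt.hasFDerivAt.hasFDerivWithinAt)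
              ((hs.injOn_of_deriv_ne_zero hg hd).mono inter_subset_right)
      _ ≤ volume N :=
          measure_mono ((image_mono inter_subset_left).trans (image_preimage_subset g N))
      _ = 0 := hN0
  rw [setLIntegral_eq_zero_iff hSm (measurable_deriv g).abs.ennreal_ofReal, ae_iff] at hint
  refine measure_mono_null (fun x hx => ?_) hint
  simpa [hd x hx.2] using hx

theorem volume_preimage_eq_zero_of_countable_deriv_eq_zero {g : ℝ → ℝ}
    (hg : Differentiable ℝ g) (hg' : Continuous (deriv g)) (hZ : (deriv g ⁻¹' {0}).Countable)
    {N : Set ℝ} (hN0 : volume N = 0) : volume (g ⁻¹' N) = 0 := by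
  set M := toMeasurable volume N
  have hM0 : volume M = 0 := by rw [measure_toMeasurable]; exact hN0
  refine measure_mono_null (preimage_mono (subset_toMeasurable volume N)) ?_
  rw [← inter_union_compl (g ⁻¹' M) (deriv g ⁻¹' {0})]
  refine measure_union_null (measure_mono_null inter_subset_right (hZ.measure_zero _)) ?_
  refine measure_null_of_locally_null _ fun w hw => ?_
  obtain ⟨r, hr, hball⟩ := Metric.isOpen_iff.1
    ((isClosed_singleton.preimage hg').isOpen_compl) w hw.2
  refine ⟨_, inter_mem_nhdsWithin _ (Metric.ball_mem_nhds w hr),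
    measure_mono_null (inter_subset_inter_left _ inter_subset_left) ?_⟩
  rw [Real.ball_eq_Ioo]
  exact ordConnected_Ioo.volume_preimage_inter_eq_zero hg
    (fun x hx => by simpa using hball (Real.ball_eq_Ioo w r ▸ hx))
    (measurableSet_toMeasurable _ _) hM0

theorem unif_absolutelyContinuous (ε : ℝ) : unif ε ≪ volume :=
  (Measure.absolutelyContinuous_of_le Measure.restrict_le_self).smul_left _

theorem unif_preimage_cmap_eq_zero {ψ : ℝ → ℝ} (hper : Function.Periodic ψ 1)
    (hψ : ContDiff ℝ 1 ψ) (h1 : H1 ψ) {L : ℝ} (hL : L ≠ 0) (a ε x : ℝ) {A : Set ℝ}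
    (hA : volume A = 0) : unif ε {w | cmap ψ L a (x + w) ∈ A} = 0 := by
  set g : ℝ → ℝ := fun w => L * ψ (x + w) + a
  have hψd : Differentiable ℝ ψ := hψ.differentiable one_ne_zero
  have hg : ∀ w, HasDerivAt g (L * deriv ψ (x + w)) w := fun w =>
    (((hψd (x + w)).hasDerivAt.comp_const_add x w).const_mul L).add_const a
  have hderiv : deriv g = fun w => L * deriv ψ (x + w) := funext fun w => (hg w).deriv
  have hZ : deriv g ⁻¹' {0} = (x + ·) ⁻¹' Crit ψ := by
    ext w
    simp [hderiv, Crit, hL]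
  have hcrit : (Crit ψ).Countable := hper.deriv.countable_preimage (t := {0}) h1.countable
  refine unif_absolutelyContinuous ε
    (volume_preimage_eq_zero_of_countable_deriv_eq_zero (g := g) (fun w => (hg w).differentiableAt)
      ?_ ?_ (volume_preimage_fract_eq_zero hA))
  · rw [hderiv]
    exact continuous_const.mul ((hψ.continuous_deriv le_rfl).comp (continuous_const_add x))
  · rw [hZ]
    exact hcrit.preimage (add_right_injective x)

theorem stationary_ac_general (ψ : ℝ → ℝ) (hper : Function.Periodic ψ 1) (hsm : ContDiff ℝ 2 ψ)
    (h1 : H1 ψ) (L a ε : ℝ) (hL : 0 < L)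
    (μ : Measure ℝ) (hμ : IsStationaryCirc ψ L a ε μ) :
    μ ≪ volume := by
  refine Measure.AbsolutelyContinuous.mk fun A hA hA0 => ?_
  rw [hμ.2.2 A hA]
  simp only [unif_preimage_cmap_eq_zero hper (hsm.of_le (by norm_num)) h1 hL.ne' a ε _ hA0,
    lintegral_zero]

/-- Every stationary measure of the randomly perturbed system is absolutely continuous with
respect to Lebesgue measure (Section 3.2). -/
theorem stationary_ac (ψ : ℝ → ℝ) (hper : Function.Periodic ψ 1) (hsm : ContDiff ℝ 2 ψ)
    (h1 : H1 ψ) (L a ε : ℝ) (hL : 0 < L) (ha : a ∈ Ico (0:ℝ) 1) (hε : 0 < ε)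
    (μ : Measure ℝ) (hμ : IsStationaryCirc ψ L a ε μ) :
    μ ≪ volume :=
  stationary_ac_general ψ hper hsm h1 L a ε hL μ hμ
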